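/- arXiv:0803.3750 — 3 statements merged into one kernel-verified Lean document; each statement's English description precedes it below -/
import Mathlib

section
/- Taking W = B^c in the pivotality bound: for f : {-1,1}^I → ℝ and B ⊆ I, ∑_{∅≠S⊆B} f̂(S)² ≤ 4·‖f‖_∞²·P[Λ_B]², where Λ_B is the event that B is pivotal for f. -/
open Finset

variable {I : Type*} [Fintype I] [DecidableEq I]

/-- Expectation with respect to the uniform probability measure on `{-1,1}^I ≅ (I → Bool)`. -/
noncomputable def expec (f : (I → Bool) → ℝ) : ℝ :=
  (∑ ω : I → Bool, f ω) / (Fintype.card (I → Bool) : ℝ)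

/-- The value `±1` of a bit. -/
noncomputable def sgn (b : Bool) : ℝ := if b then 1 else -1

/-- The Walsh function `χ_S(ω) = ∏_{i ∈ S} ω_i`. -/
noncomputable def chi (S : Finset I) (ω : I → Bool) : ℝ := ∏ i ∈ S, sgn (ω i)

/-- The Fourier coefficient `f̂(S) = E[f ⬝ χ_S]`. -/
noncomputable def fhat (f : (I → Bool) → ℝ) (S : Finset I) : ℝ :=
  expec (fun ω => f ω * chi S ω)

open Classical in
/-- The indicator of the event `Λ_B` that the set of bits `B` is pivotal for `f`. -/
noncomputable def pivInd (f : (I → Bool) → ℝ) (B : Finset I) (ω : I → Bool) : ℝ :=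
  if ∃ ω' : I → Bool, (∀ i ∉ B, ω' i = ω i) ∧ f ω' ≠ f ω then 1 else 0

/-- The sup norm `‖f‖_∞`. -/
noncomputable def supnorm (f : (I → Bool) → ℝ) : ℝ := ⨆ ω : I → Bool, |f ω|


/-!
Let `g = E[f | ω_B]` be the average of `f` over the coordinates outside `B`. Its Walsh expansion
is the part of that of `f` supported on subsets of `B`, so by Parseval the left-hand side is
`E[(g - E f)²]`. Writing `E f` as the average over `ζ` of `E_η f(η_B ζ_{Bᶜ})` gives
`g(ω) - E f = E_ζ [f(ω_B ζ_{Bᶜ}) - E_η f(η_B ζ_{Bᶜ})]`, and the integrand vanishes unless `B` is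
pivotal at `ζ`, in which case it is at most `2 ‖f‖_∞`. Hence `|g - E f| ≤ 2 ‖f‖_∞ P[Λ_B]`
pointwise.
-/

section Expectation

lemma expec_mono {a b : (I → Bool) → ℝ} (h : ∀ ω, a ω ≤ b ω) : expec a ≤ expec b :=
  div_le_div_of_nonneg_right (sum_le_sum fun ω _ => h ω) (Nat.cast_nonneg _)

lemma expec_const (c : ℝ) : expec (fun _ : I → Bool => c) = c := by
  have : (Fintype.card (I → Bool) : ℝ) ≠ 0 := by positivity
  rw [expec, sum_const, card_univ, nsmul_eq_mul, mul_div_cancel_left₀ c this]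

lemma abs_expec_le (a : (I → Bool) → ℝ) : |expec a| ≤ expec fun ω => |a ω| := by
  rw [expec, abs_div, Nat.abs_cast]
  exact div_le_div_of_nonneg_right (abs_sum_le_sum_abs _ _) (Nat.cast_nonneg _)

lemma expec_sub (a b : (I → Bool) → ℝ) :
    expec (fun ω => a ω - b ω) = expec a - expec b := by
  rw [expec, expec, expec, sum_sub_distrib, sub_div]

lemma expec_const_mul (c : ℝ) (a : (I → Bool) → ℝ) :
    expec (fun ω => c * a ω) = c * expec a := by
  rw [expec, expec, ← mul_sum, mul_div_assoc]

lemma expec_mul_const (c : ℝ) (a : (I → Bool) → ℝ) :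
    expec (fun ω => a ω * c) = expec a * c := by
  simpa only [mul_comm _ c] using expec_const_mul c a

lemma expec_sum {α : Type*} (s : Finset α) (F : α → (I → Bool) → ℝ) :
    expec (fun ω => ∑ x ∈ s, F x ω) = ∑ x ∈ s, expec (F x) := by
  simp only [expec, ← sum_div]
  rw [sum_comm]

lemma expec_comm (F : (I → Bool) → (I → Bool) → ℝ) :
    expec (fun ω => expec (F ω)) = expec fun ζ => expec fun ω => F ω ζ := by
  simp only [expec, ← sum_div]
  rw [sum_comm]

lemma expec_prod (g : I → Bool → ℝ) :
    expec (fun ω => ∏ i, g i (ω i)) = ∏ i, (g i true + g i false) / 2 := by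
  rw [expec, ← Fintype.prod_sum, prod_div_distrib, prod_const, card_univ, Fintype.card_fun,
    Fintype.card_bool]
  simp only [Fintype.sum_bool, Nat.cast_pow, Nat.cast_ofNat]

end Expectation

section Walsh

lemma sgn_mul_sgn (a b : Bool) : sgn a * sgn b = if a = b then 1 else -1 := by
  cases a <;> cases b <;> norm_num [sgn]

lemma expec_chi (S : Finset I) : expec (chi S) = if S = ∅ then 1 else 0 := by
  have hchi : chi S = fun ω => ∏ i, if i ∈ S then sgn (ω i) else 1 := by
    funext ω
    rw [chi, prod_ite_mem, univ_inter]
  have hmean : ∀ i, ((if i ∈ S then sgn true else 1) + if i ∈ S then sgn false else 1) / 2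
      = if i ∉ S then 1 else 0 := by
    intro i
    by_cases hi : i ∈ S <;> norm_num [hi, sgn]
  rw [hchi, expec_prod fun i b => if i ∈ S then sgn b else 1]
  simp only [hmean, prod_boole, mem_univ, true_implies, eq_empty_iff_forall_notMem]

lemma sum_chi_mul_chi (σ ω : I → Bool) :
    ∑ S : Finset I, chi S σ * chi S ω = if σ = ω then (Fintype.card (I → Bool) : ℝ) else 0 := by
  have hfactor : ∀ i, 1 + sgn (σ i) * sgn (ω i) = if σ i = ω i then 2 else 0 := by
    intro i
    rw [sgn_mul_sgn]
    split_ifs <;> norm_num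
  simp only [chi, ← prod_mul_distrib]
  rw [← powerset_univ, ← prod_one_add]
  simp only [hfactor, prod_ite_zero, mem_univ, true_implies, funext_iff, prod_const, card_univ,
    Fintype.card_fun, Fintype.card_bool, Nat.cast_pow, Nat.cast_ofNat]

lemma fourier_inversion (f : (I → Bool) → ℝ) (ω : I → Bool) :
    ∑ S : Finset I, fhat f S * chi S ω = f ω := by
  have hN : (Fintype.card (I → Bool) : ℝ) ≠ 0 := by positivity
  calc ∑ S : Finset I, fhat f S * chi S ω
      = expec fun σ => f σ * ∑ S : Finset I, chi S σ * chi S ω := by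
        simp only [fhat, ← expec_mul_const, ← expec_sum, mul_sum, mul_assoc]
    _ = f ω := by
        simp only [sum_chi_mul_chi, mul_ite, mul_zero, expec, sum_ite_eq', mem_univ, if_true]
        exact mul_div_cancel_right₀ (f ω) hN

lemma parseval (f : (I → Bool) → ℝ) :
    ∑ S : Finset I, fhat f S ^ 2 = expec fun ω => f ω ^ 2 := by
  calc ∑ S : Finset I, fhat f S ^ 2
      = ∑ S : Finset I, expec fun ω => fhat f S * (f ω * chi S ω) := by
        simp only [expec_const_mul, fhat, sq]
    _ = expec fun ω => f ω * ∑ S : Finset I, fhat f S * chi S ω := by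
        rw [← expec_sum]
        simp only [mul_sum, mul_left_comm]
    _ = expec fun ω => f ω ^ 2 := by
        simp only [fourier_inversion, sq]

lemma fhat_empty (f : (I → Bool) → ℝ) : fhat f ∅ = expec f := by
  simp [fhat, chi]

lemma fhat_sub_const (f : (I → Bool) → ℝ) (c : ℝ) (S : Finset I) :
    fhat (fun ω => f ω - c) S = fhat f S - if S = ∅ then c else 0 := by
  simp only [fhat, sub_mul, expec_sub, expec_const_mul, expec_chi, mul_ite, mul_one, mul_zero]

end Walsh

section ConditionalExpectation

/-- `E[f | ω_B]`: the average of `f` over the coordinates outside `B`. -/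
noncomputable def condExpec (B : Finset I) (f : (I → Bool) → ℝ) (ω : I → Bool) : ℝ :=
  expec fun ζ => f (B.piecewise ω ζ)

variable (B : Finset I)

lemma expec_expec_piecewise (F : (I → Bool) → (I → Bool) → ℝ) :
    (expec fun ω => expec fun ζ => F (B.piecewise ω ζ) (B.piecewise ζ ω))
      = expec fun ω => expec fun ζ => F ω ζ := by
  have hswap : Function.Involutive
      fun p : (I → Bool) × (I → Bool) => (B.piecewise p.1 p.2, B.piecewise p.2 p.1) := by
    rintro ⟨ω, ζ⟩
    ext i <;> by_cases hi : i ∈ B <;> simp [hi]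
  simp only [expec, ← sum_div]
  rw [← sum_product', ← sum_product', univ_product_univ, Fintype.sum_equiv hswap.toPerm (fun p => F (B.piecewise p.1 p.2) (B.piecewise p.2 p.1))
    (fun p => F p.1 p.2) fun _ => rfl]

lemma expec_condExpec_mul (f g : (I → Bool) → ℝ) :
    (expec fun ω => condExpec B f ω * g ω) = expec fun ω => f ω * condExpec B g ω := by
  have hglue : ∀ ω ζ : I → Bool, B.piecewise (B.piecewise ω ζ) (B.piecewise ζ ω) = ω := by
    intro ω ζ
    ext i
    by_cases hi : i ∈ B <;> simp [hi]
  have := expec_expec_piecewise B fun ω ζ => f ω * g (B.piecewise ω ζ)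
  simp only [hglue] at this
  simpa only [condExpec, ← expec_mul_const, ← expec_const_mul] using this

lemma expec_condExpec (f : (I → Bool) → ℝ) : expec (condExpec B f) = expec f := by
  unfold condExpec
  simpa [condExpec, expec_const] using expec_condExpec_mul B f fun _ => 1

omit [Fintype I] in
lemma chi_piecewise (S : Finset I) (ω ζ : I → Bool) :
    chi S (B.piecewise ω ζ) = chi (S ∩ B) ω * chi (S \ B) ζ := by
  rw [chi, ← prod_inter_mul_prod_sdiff S B]
  congr 1 <;> refine prod_congr rfl fun i hi => ?_ <;> simp_all

lemma condExpec_chi (S : Finset I) : condExpec B (chi S) = if S ⊆ B then chi S else 0 := by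
  funext ω
  simp only [condExpec, chi_piecewise, expec_const_mul, expec_chi, sdiff_eq_empty_iff_subset]
  split_ifs with hSB
  · rw [inter_eq_left.mpr hSB, mul_one]
  · simp

lemma fhat_condExpec (f : (I → Bool) → ℝ) (S : Finset I) :
    fhat (condExpec B f) S = if S ⊆ B then fhat f S else 0 := by
  rw [fhat, expec_condExpec_mul, condExpec_chi]
  split_ifs
  · rfl
  · simp [expec_const]

lemma fhat_condExpec_sub_expec (f : (I → Bool) → ℝ) (S : Finset I) :
    fhat (fun ω => condExpec B f ω - expec f) S = if S.Nonempty ∧ S ⊆ B then fhat f S else 0 := by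
  rw [fhat_sub_const, fhat_condExpec]
  rcases S.eq_empty_or_nonempty with rfl | hS
  · simp [fhat_empty]
  · simp [hS, hS.ne_empty]

end ConditionalExpectation

section Pivotality

omit [DecidableEq I] in
lemma abs_le_supnorm (f : (I → Bool) → ℝ) (ω : I → Bool) : |f ω| ≤ supnorm f :=
  le_ciSup (f := fun ω => |f ω|) (Set.finite_range _).bddAbove ω

lemma abs_expec_comp_le_supnorm (f : (I → Bool) → ℝ) (g : (I → Bool) → I → Bool) :
    |expec fun η => f (g η)| ≤ supnorm f :=
  calc |expec fun η => f (g η)| ≤ expec fun η => |f (g η)| := abs_expec_le _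
    _ ≤ expec fun _ => supnorm f := expec_mono fun η => abs_le_supnorm f (g η)
    _ = supnorm f := expec_const _

variable (f : (I → Bool) → ℝ) (B : Finset I)

lemma abs_sub_expec_piecewise_le (ω ζ : I → Bool) :
    |f (B.piecewise ω ζ) - expec fun η => f (B.piecewise η ζ)| ≤ 2 * supnorm f * pivInd f B ζ := by
  unfold pivInd
  split_ifs with hpiv
  · calc |f (B.piecewise ω ζ) - expec fun η => f (B.piecewise η ζ)|
        ≤ |f (B.piecewise ω ζ)| + |expec fun η => f (B.piecewise η ζ)| := abs_sub _ _
      _ ≤ supnorm f + supnorm f :=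
          add_le_add (abs_le_supnorm f _) (abs_expec_comp_le_supnorm f _)
      _ = 2 * supnorm f * 1 := by ring
  · push Not at hpiv
    have hconst : ∀ η, f (B.piecewise η ζ) = f ζ :=
      fun η => hpiv _ fun i hi => piecewise_eq_of_notMem _ _ _ hi
    simp [hconst, expec_const]

lemma abs_condExpec_sub_expec_le (ω : I → Bool) :
    |condExpec B f ω - expec f| ≤ 2 * supnorm f * expec (pivInd f B) := by
  have htower : expec f = expec fun ζ => expec fun η => f (B.piecewise η ζ) := by
    rw [← expec_condExpec B f]
    exact expec_comm _
  calc |condExpec B f ω - expec f|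
      = |expec fun ζ => f (B.piecewise ω ζ) - expec fun η => f (B.piecewise η ζ)| := by
        rw [htower, condExpec, expec_sub]
    _ ≤ expec fun ζ => |f (B.piecewise ω ζ) - expec fun η => f (B.piecewise η ζ)| :=
        abs_expec_le _
    _ ≤ expec fun ζ => 2 * supnorm f * pivInd f B ζ :=
        expec_mono fun ζ => abs_sub_expec_piecewise_le f B ω ζ
    _ = 2 * supnorm f * expec (pivInd f B) := expec_const_mul _ _

end Pivotality

/-- Taking `W = B^c` in the pivotality bound:
`∑_{∅ ≠ S ⊆ B} f̂(S)² ≤ 4 ‖f‖_∞² P[Λ_B]²`. -/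
theorem spectral_subset_pivotal_bound (f : (I → Bool) → ℝ) (B : Finset I) :
    (∑ S : Finset I, if S.Nonempty ∧ S ⊆ B then fhat f S ^ 2 else 0)
      ≤ 4 * supnorm f ^ 2 * expec (pivInd f B) ^ 2 := by
  calc (∑ S : Finset I, if S.Nonempty ∧ S ⊆ B then fhat f S ^ 2 else 0)
      = ∑ S : Finset I, fhat (fun ω => condExpec B f ω - expec f) S ^ 2 := by
        refine sum_congr rfl fun S _ => ?_
        rw [fhat_condExpec_sub_expec]
        split_ifs <;> simp
    _ = expec fun ω => (condExpec B f ω - expec f) ^ 2 := parseval _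
    _ ≤ expec fun _ => (2 * supnorm f * expec (pivInd f B)) ^ 2 :=
        expec_mono fun ω => (abs_le.mp (abs_condExpec_sub_expec_le f B ω)).elim sq_le_sq'
    _ = 4 * supnorm f ^ 2 * expec (pivInd f B) ^ 2 := by
        rw [expec_const]
        ring
end

section
/- Quantitative tail version: under the hypotheses of the large deviation principle (y_i ≤ x_i a.s. and the conditional marginal condition with constant a ∈ (0,1]), for every t ≥ 0 and s > 0: P[Y ≤ t] ≤ P[X < (e/a)(t+s)] + (e^{t−1}/s)·E[e^{−aX/e}]. -/
open MeasureTheory Real Finset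

/-!
Put `L = a - 1 - a / e` and `r = e^L ∈ [1/e, 1]`. Whenever `0 ≤ Y ≤ X`,
`1[Y ≤ t] ≤ 1[X < (e/a)(t+s)] + (e^{t-1}/s) e^{-aX/e} + (e^{-Lt}/s) r^Y (a r (X - Y) - (1 - a) Y)`:
on `{X ≥ (e/a)(t+s), Y ≤ t}` the last term alone is at least `1`, and everywhere the last two
terms have nonnegative sum by `v ≤ e^{v-1}`. Taking expectations, it remains to show
`E[r^Y ((1 - a) Y - a r (X - Y))] ≥ 0`. This expectation is
`r ∑_j E[(y_j - a x_j) ∏_{i ≠ j} r^{y_i}]`, and expanding `r^{y_i} = r + (1 - r) 1[y_i = 0]`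
turns each summand into a nonnegative combination of `P[y_j = 1, y_I = 0] - a P[x_j = 1, y_I = 0]`
over `I ∌ j`.
-/

theorem Finset.prod_ite_eq_sum_powerset {ι R : Type*} [CommRing R] [DecidableEq ι]
    (s : Finset ι) (p : ι → Prop) [DecidablePred p] (r : R) :
    ∏ i ∈ s, (if p i then r else 1) =
      ∑ t ∈ s.powerset, (1 - r) ^ #t * r ^ #(s \ t) * (if ∀ i ∈ t, ¬ p i then 1 else 0) := by
  have h : ∀ i, (if p i then r else 1) = (1 - r) * (if ¬ p i then 1 else 0) + r := fun i => by
    split_ifs <;> ring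
  simp_rw [h, prod_add, prod_mul_distrib, prod_const, prod_boole]
  exact sum_congr rfl fun _ _ => by ring

theorem Function.FactorsThrough.integrable {Ω β : Type*} [MeasurableSpace Ω] {μ : Measure Ω}
    [IsFiniteMeasure μ] [Finite β] [MeasurableSpace β] [MeasurableSingletonClass β]
    {V : Ω → β} {f : Ω → ℝ} (hf : f.FactorsThrough V) (hV : Measurable V) : Integrable f μ := by
  have hfV : f = Function.extend V f 0 ∘ V := funext fun ω => (hf.extend_apply 0 ω).symm
  rw [hfV]
  exact Integrable.of_finite.comp_measurable hV

theorem measurable_of_measurableSet_eq_true {Ω ι : Type*} [MeasurableSpace Ω] {x : Ω → ι → Bool}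
    (hx : ∀ i, MeasurableSet {ω | x ω i = true}) : Measurable x :=
  measurable_pi_lambda x fun i => measurable_to_bool (hx i)

section Tilt
variable {a L t s X Y : ℝ}

theorem tilted_add_exp_nonneg (ha : 0 ≤ a) (ht : 0 ≤ t) (hYX : Y ≤ X) (hL : L = a - 1 - a / exp 1) :
    0 ≤ exp (t - 1) * exp (-a * X / exp 1)
      + exp (-L * t) * (exp (L * Y) * (a * exp L * (X - Y) - (1 - a) * Y)) := by
  have he : 1 ≤ exp 1 := one_le_exp zero_le_one
  have hae : a / exp 1 ≤ a := div_le_self ha he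
  have hexpL : (exp 1)⁻¹ ≤ exp L := by
    rw [← exp_neg]; exact exp_le_exp.2 (by linarith)
  set v := (1 - a) * Y - a * (X - Y) / exp 1
  have hv : (1 - a) * Y - a * exp L * (X - Y) ≤ v := by
    have : a * (X - Y) * (exp 1)⁻¹ ≤ a * (X - Y) * exp L :=
      mul_le_mul_of_nonneg_left hexpL (mul_nonneg ha (sub_nonneg.2 hYX))
    simp only [v, div_eq_mul_inv]; linarith
  have hLv : L * Y + v = -a * X / exp 1 := by simp only [v, hL]; ring
  have hLt : -L * t ≤ t := by rw [hL]; nlinarith [mul_nonneg (sub_nonneg.2 hae) ht]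
  have hexp : exp (-L * t) * (exp (L * Y) * ((1 - a) * Y - a * exp L * (X - Y)))
      ≤ exp (t - 1) * exp (-a * X / exp 1) := by
    calc exp (-L * t) * (exp (L * Y) * ((1 - a) * Y - a * exp L * (X - Y)))
        ≤ exp (-L * t) * (exp (L * Y) * exp (v - 1)) := by
          gcongr; exact hv.trans (by linarith [add_one_le_exp (v - 1)])
      _ = exp (-L * t + L * Y + v - 1) := by rw [← exp_add, ← exp_add]; congr 1; ring
      _ ≤ exp (t - 1 + -a * X / exp 1) := by gcongr; linarith
      _ = exp (t - 1) * exp (-a * X / exp 1) := exp_add _ _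
  linarith

theorem le_tilted_of_le_of_le (ha0 : 0 < a) (ha1 : a ≤ 1) (hs : 0 ≤ s) (hY0 : 0 ≤ Y) (hYt : Y ≤ t)
    (hX : exp 1 / a * (t + s) ≤ X) (hL : L = a - 1 - a / exp 1) :
    s ≤ exp (-L * t) * (exp (L * Y) * (a * exp L * (X - Y) - (1 - a) * Y)) := by
  have he : 1 ≤ exp 1 := one_le_exp zero_le_one
  have hae : a / exp 1 ≤ a := div_le_self ha0.le he
  have hL0 : L ≤ 0 := by rw [hL]; linarith [div_nonneg ha0.le (exp_pos 1).le]
  have hexpL : (exp 1)⁻¹ ≤ exp L := by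
    rw [← exp_neg]; exact exp_le_exp.2 (by linarith)
  have ht : 0 ≤ t := hY0.trans hYt
  have hX0 : 0 ≤ X := le_trans (by positivity) hX
  have hts : t + s ≤ a * exp L * X := by
    calc t + s = a * (exp 1)⁻¹ * (exp 1 / a * (t + s)) := by field_simp
      _ ≤ a * exp L * X := by gcongr
  have hYa : a * exp L * Y ≤ a * Y :=
    mul_le_mul_of_nonneg_right (mul_le_of_le_one_right ha0.le (exp_le_one_iff.2 hL0)) hY0
  have hgap : s ≤ a * exp L * (X - Y) - (1 - a) * Y := by nlinarith
  have hexp : 1 ≤ exp (-L * t) * exp (L * Y) := by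
    rw [← exp_add]; exact one_le_exp (by nlinarith)
  calc s ≤ a * exp L * (X - Y) - (1 - a) * Y := hgap
    _ ≤ exp (-L * t) * exp (L * Y) * (a * exp L * (X - Y) - (1 - a) * Y) :=
      le_mul_of_one_le_left (hs.trans hgap) hexp
    _ = _ := mul_assoc _ _ _

theorem ite_le_tail_bound (ha0 : 0 < a) (ha1 : a ≤ 1) (ht : 0 ≤ t) (hs : 0 < s) (hY0 : 0 ≤ Y)
    (hYX : Y ≤ X) (hL : L = a - 1 - a / exp 1) :
    (if Y ≤ t then (1 : ℝ) else 0) ≤ (if X < exp 1 / a * (t + s) then 1 else 0)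
      + exp (t - 1) / s * exp (-a * X / exp 1)
      + exp (-L * t) / s * (exp (L * Y) * (a * exp L * (X - Y) - (1 - a) * Y)) := by
  have h0 : 0 ≤ exp (t - 1) / s * exp (-a * X / exp 1)
      + exp (-L * t) / s * (exp (L * Y) * (a * exp L * (X - Y) - (1 - a) * Y)) := by
    rw [div_mul_eq_mul_div, div_mul_eq_mul_div, ← add_div]
    exact div_nonneg (tilted_add_exp_nonneg ha0.le ht hYX hL) hs.le
  split_ifs with hYt hXM
  · linarith
  · have h1 : 1 ≤ exp (-L * t) / s * (exp (L * Y) * (a * exp L * (X - Y) - (1 - a) * Y)) := by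
      rw [div_mul_eq_mul_div, one_le_div hs]
      exact le_tilted_of_le_of_le ha0 ha1 hs.le hY0 hYt (not_lt.1 hXM) hL
    have h2 : 0 ≤ exp (t - 1) / s * exp (-a * X / exp 1) := by positivity
    linarith
  · linarith
  · linarith

end Tilt

theorem exp_mul_sum_ite {ι : Type*} (s : Finset ι) (p : ι → Prop) [DecidablePred p] (c : ℝ) :
    exp (c * ∑ i ∈ s, if p i then 1 else 0) = ∏ i ∈ s, if p i then exp c else 1 := by
  rw [mul_sum, exp_sum]
  exact prod_congr rfl fun i _ => by split_ifs <;> simp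

theorem mul_sum_sub_mul_prod_erase {ι : Type*} [Fintype ι] [DecidableEq ι] {b c : ι → Bool}
    (hcb : ∀ i, c i ≤ b i) (a r : ℝ) :
    r * ∑ j, ((if c j then 1 else 0) - a * (if b j then 1 else 0)) *
        ∏ i ∈ univ.erase j, (if c i then r else 1)
      = (∏ i, if c i then r else 1) * ((1 - a) * ∑ i, (if c i then 1 else 0)
          - a * r * (∑ i, (if b i then 1 else 0) - ∑ i, (if c i then 1 else 0))) := by
  have hj : ∀ j, r * ((if c j then 1 else 0) - a * (if b j then 1 else 0)) =
      (if c j then r else 1) * ((1 - a) * (if c j then 1 else 0)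
        - a * r * ((if b j then 1 else 0) - (if c j then 1 else 0))) := fun j => by
    have := hcb j
    revert this
    cases b j <;> cases c j <;> simp [mul_comm]
  calc r * ∑ j, ((if c j then 1 else 0) - a * (if b j then 1 else 0)) *
        ∏ i ∈ univ.erase j, (if c i then r else 1)
      = ∑ j, (∏ i, if c i then r else 1) * ((1 - a) * (if c j then 1 else 0)
          - a * r * ((if b j then 1 else 0) - (if c j then 1 else 0))) := by
        rw [mul_sum]
        refine sum_congr rfl fun j _ => ?_
        rw [← mul_prod_erase univ _ (mem_univ j), ← mul_assoc, hj]
        ring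
    _ = _ := by rw [← mul_sum, sum_sub_distrib, ← mul_sum, ← mul_sum, sum_sub_distrib]

section Expectation

variable {Ω ι : Type*} [MeasurableSpace Ω] {μ : Measure Ω} [IsFiniteMeasure μ] [Fintype ι]
  {x y : Ω → ι → Bool} {a r : ℝ}

theorem integrable_of_depends_on_bool_vectors (hxm : ∀ i, MeasurableSet {ω | x ω i = true})
    (hym : ∀ i, MeasurableSet {ω | y ω i = true}) {f : Ω → ℝ}
    (hf : ∀ ω ω', x ω = x ω' → y ω = y ω' → f ω = f ω') : Integrable f μ :=
  Function.FactorsThrough.integrable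
    (fun ω ω' h => hf ω ω' (congrArg Prod.fst h) (congrArg Prod.snd h))
    ((measurable_of_measurableSet_eq_true hxm).prodMk (measurable_of_measurableSet_eq_true hym))

theorem integral_sub_mul_prod_erase_nonneg [DecidableEq ι]
    (hxm : ∀ i, MeasurableSet {ω | x ω i = true}) (hym : ∀ i, MeasurableSet {ω | y ω i = true})
    (hr0 : 0 ≤ r) (hr1 : r ≤ 1) (j : ι)
    (hcond : ∀ I : Finset ι, j ∉ I →
      a * μ.real ({ω | x ω j = true} ∩ {ω | ∀ i ∈ I, y ω i = false}) ≤
        μ.real ({ω | y ω j = true} ∩ {ω | ∀ i ∈ I, y ω i = false})) :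
    0 ≤ ∫ ω, ((if y ω j then 1 else 0) - a * (if x ω j then 1 else 0)) *
      ∏ i ∈ univ.erase j, (if y ω i then r else 1) ∂μ := by
  simp_rw [prod_ite_eq_sum_powerset, Bool.not_eq_true, mul_sum]
  rw [integral_finsetSum _ fun I _ =>
    integrable_of_depends_on_bool_vectors hxm hym fun ω ω' hx hy => by rw [hx, hy]]
  refine sum_nonneg fun I hI => ?_
  set Z := {ω | ∀ i ∈ I, y ω i = false}
  have hZ : MeasurableSet Z := measurable_of_measurableSet_eq_true hym
    (MeasurableSet.of_discrete (s := {b : ι → Bool | ∀ i ∈ I, b i = false}))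
  have hpt : ∀ ω, ((if y ω j then 1 else 0) - a * (if x ω j then 1 else 0)) *
      ((1 - r) ^ #I * r ^ #(univ.erase j \ I) * (if ∀ i ∈ I, y ω i = false then 1 else 0)) =
      (1 - r) ^ #I * r ^ #(univ.erase j \ I) *
        (({ω | y ω j = true} ∩ Z).indicator 1 ω - a * ({ω | x ω j = true} ∩ Z).indicator 1 ω) := by
    intro ω
    simp only [Z, Set.indicator_apply, Set.mem_inter_iff, Set.mem_ofPred_eq, Pi.one_apply]
    split_ifs <;> simp_all <;> ring
  rw [integral_congr_ae (ae_of_all _ hpt), integral_const_mul, integral_sub, integral_const_mul,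
    integral_indicator_one ((hym j).inter hZ), integral_indicator_one ((hxm j).inter hZ)]
  · refine mul_nonneg (by have := sub_nonneg.2 hr1; positivity) (sub_nonneg.2 (hcond I ?_))
    exact fun hjI => by simpa using mem_powerset.1 hI hjI
  · exact (integrable_const 1).indicator ((hym j).inter hZ)
  · exact ((integrable_const 1).indicator ((hxm j).inter hZ)).const_mul a

theorem integral_tilted_nonneg [DecidableEq ι] (hxm : ∀ i, MeasurableSet {ω | x ω i = true})
    (hym : ∀ i, MeasurableSet {ω | y ω i = true}) (hyx : ∀ᵐ ω ∂μ, ∀ i, y ω i ≤ x ω i)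
    (hr0 : 0 ≤ r) (hr1 : r ≤ 1)
    (hcond : ∀ (j : ι) (I : Finset ι), j ∉ I →
      a * μ.real ({ω | x ω j = true} ∩ {ω | ∀ i ∈ I, y ω i = false}) ≤
        μ.real ({ω | y ω j = true} ∩ {ω | ∀ i ∈ I, y ω i = false})) :
    0 ≤ ∫ ω, (∏ i, if y ω i then r else 1) * ((1 - a) * ∑ i, (if y ω i then 1 else 0)
      - a * r * (∑ i, (if x ω i then 1 else 0) - ∑ i, (if y ω i then 1 else 0))) ∂μ := by
  rw [← integral_congr_ae (hyx.mono fun ω h => mul_sum_sub_mul_prod_erase h a r),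
    integral_const_mul, integral_finsetSum _ fun j _ =>
      integrable_of_depends_on_bool_vectors hxm hym fun ω ω' hx hy => by rw [hx, hy]]
  exact mul_nonneg hr0 (sum_nonneg fun j _ =>
    integral_sub_mul_prod_erase_nonneg hxm hym hr0 hr1 j (hcond j))

end Expectation

theorem measureReal_le_of_ae_ite_le {Ω : Type*} [MeasurableSpace Ω] {μ : Measure Ω}
    [IsFiniteMeasure μ] {p q : Ω → Prop} [DecidablePred p] [DecidablePred q]
    (hp : MeasurableSet {ω | p ω}) (hq : MeasurableSet {ω | q ω}) {c K : ℝ} {e G : Ω → ℝ}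
    (he : Integrable e μ) (hG : Integrable G μ) (hK : 0 ≤ K) (hG0 : ∫ ω, G ω ∂μ ≤ 0)
    (h : ∀ᵐ ω ∂μ, (if p ω then (1 : ℝ) else 0) ≤ (if q ω then 1 else 0) + c * e ω + K * G ω) :
    μ.real {ω | p ω} ≤ μ.real {ω | q ω} + c * ∫ ω, e ω ∂μ := by
  have hind : ∀ (r : Ω → Prop) [DecidablePred r],
      (fun ω => if r ω then (1 : ℝ) else 0) = {ω | r ω}.indicator 1 := fun r _ =>
    funext fun ω => by simp [Set.indicator_apply]
  have hpi : Integrable (fun ω => if p ω then (1 : ℝ) else 0) μ := by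
    rw [hind]; exact (integrable_const 1).indicator hp
  have hqi : Integrable (fun ω => if q ω then (1 : ℝ) else 0) μ := by
    rw [hind]; exact (integrable_const 1).indicator hq
  calc μ.real {ω | p ω} = ∫ ω, (if p ω then (1 : ℝ) else 0) ∂μ := by
        rw [hind, integral_indicator_one hp]
    _ ≤ ∫ ω, ((if q ω then 1 else 0) + c * e ω + K * G ω) ∂μ :=
        integral_mono_ae hpi ((hqi.add (he.const_mul c)).add (hG.const_mul K)) h
    _ = μ.real {ω | q ω} + c * ∫ ω, e ω ∂μ + K * ∫ ω, G ω ∂μ := by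
        rw [integral_add _ (hG.const_mul K), integral_add hqi (he.const_mul c), integral_const_mul,
          integral_const_mul, hind, integral_indicator_one hq]
        exact hqi.add (he.const_mul c)
    _ ≤ μ.real {ω | q ω} + c * ∫ ω, e ω ∂μ := by
        linarith [mul_nonpos_of_nonneg_of_nonpos hK hG0]

/-- **Quantitative tail version of the large deviation principle:** under the
hypotheses `y_i ≤ x_i` a.s. and
`P[y_j = 1, y_i = 0 ∀ i ∈ I] ≥ a ⬝ P[x_j = 1, y_i = 0 ∀ i ∈ I]` for `j ∉ I`,
for every `t ≥ 0` and `s > 0`: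
`P[Y ≤ t] ≤ P[X < (e/a)(t+s)] + (e^{t−1}/s) E[e^{−aX/e}]`. -/
theorem tail_inequality {Ω : Type*} [MeasurableSpace Ω]
    (μ : Measure Ω) [IsProbabilityMeasure μ]
    (n : ℕ) (x y : Ω → Fin n → Bool)
    (hxm : ∀ i, MeasurableSet {ω | x ω i = true})
    (hym : ∀ i, MeasurableSet {ω | y ω i = true})
    (hyx : ∀ᵐ ω ∂μ, ∀ i, y ω i ≤ x ω i)
    (a : ℝ) (ha0 : 0 < a) (ha1 : a ≤ 1)
    (hcond : ∀ (j : Fin n) (I : Finset (Fin n)), j ∉ I →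
      a * (μ ({ω | x ω j = true} ∩ {ω | ∀ i ∈ I, y ω i = false})).toReal ≤
        (μ ({ω | y ω j = true} ∩ {ω | ∀ i ∈ I, y ω i = false})).toReal)
    (X Y : Ω → ℝ)
    (hX : ∀ ω, X ω = ∑ i : Fin n, (if x ω i then (1 : ℝ) else 0))
    (hY : ∀ ω, Y ω = ∑ i : Fin n, (if y ω i then (1 : ℝ) else 0))
    (t s : ℝ) (ht : 0 ≤ t) (hs : 0 < s) :
    (μ {ω | Y ω ≤ t}).toReal
      ≤ (μ {ω | X ω < (exp 1 / a) * (t + s)}).toReal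
        + (exp (t - 1) / s) * ∫ ω, exp (-a * X ω / exp 1) ∂μ := by
  obtain ⟨L, hL⟩ : ∃ L : ℝ, L = a - 1 - a / exp 1 := ⟨_, rfl⟩
  have hL0 : L ≤ 0 := by rw [hL]; linarith [div_nonneg ha0.le (exp_pos 1).le]
  have hint : ∀ f : Ω → ℝ, (∀ ω ω', X ω = X ω' → Y ω = Y ω' → f ω = f ω') → Integrable f μ :=
    fun f hf => integrable_of_depends_on_bool_vectors hxm hym fun ω ω' hx hy =>
      hf ω ω' (by rw [hX, hX, hx]) (by rw [hY, hY, hy])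
  have hXm : Measurable X := by
    rw [funext hX]; exact measurable_sum _ fun i _ => measurable_const.ite (hxm i) measurable_const
  have hYm : Measurable Y := by
    rw [funext hY]; exact measurable_sum _ fun i _ => measurable_const.ite (hym i) measurable_const
  have hgap : ∫ ω, exp (L * Y ω) * (a * exp L * (X ω - Y ω) - (1 - a) * Y ω) ∂μ ≤ 0 := by
    have h := integral_tilted_nonneg hxm hym hyx (exp_pos L).le (exp_le_one_iff.2 hL0) hcond
    simp only [← exp_mul_sum_ite, ← hX, ← hY] at h
    rw [← neg_nonneg, ← integral_neg]
    convert h using 3 with ω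
    ring
  have hcert : ∀ᵐ ω ∂μ, (if Y ω ≤ t then (1 : ℝ) else 0) ≤
      (if X ω < exp 1 / a * (t + s) then 1 else 0) + exp (t - 1) / s * exp (-a * X ω / exp 1)
      + exp (-L * t) / s * (exp (L * Y ω) * (a * exp L * (X ω - Y ω) - (1 - a) * Y ω)) := by
    filter_upwards [hyx] with ω hω
    refine ite_le_tail_bound ha0 ha1 ht hs ?_ ?_ hL
    · rw [hY]; exact sum_nonneg fun i _ => by split_ifs <;> norm_num
    · rw [hX, hY]; exact sum_le_sum fun i _ => by
        have := hω i; revert this; cases x ω i <;> cases y ω i <;> simp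
  exact measureReal_le_of_ae_ite_le (measurableSet_le hYm measurable_const)
    (measurableSet_lt hXm measurable_const) (hint _ fun ω ω' hx _ => by simp only [hx])
    (hint _ fun ω ω' hx hy => by simp only [hx, hy]) (by positivity) hgap hcert
end

section
/- Projection bound for compatible spectral samples: let f : {-1,1}^I → [-1,1], let I be partitioned into sets Θ and H, and let W be the linear span of {χ_S : S ∈ 𝒳} for some collection 𝒳 of subsets of H (so every S ∈ 𝒳 is disjoint from Θ). Writing F_θ : {-1,1}^H → [-1,1] for the restriction F_θ(η) = f(θ,η) and P_W for orthogonal projection onto W, we have ∑_{S∈𝒳} f̂(S)² = ‖P_W f‖₂² ≤ (P_θ[P_W F_θ ≠ 0])², where θ is uniform on {-1,1}^Θ. -/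
open Finset

variable {I : Type*} [Fintype I] [DecidableEq I]

/-! Write `a_S = f̂(S)` and `b_θ(S) = F̂_θ(S)` for `S ∈ 𝒳`. Since each `S` avoids `Θ`, averaging
`F_θ χ_S` over `θ` recovers `f χ_S`, so `a = E_θ[b_θ]` and by Cauchy–Schwarz
`‖a‖² = E_θ⟨a, b_θ⟩ ≤ ‖a‖ E_θ‖b_θ‖`. By Bessel `‖b_θ‖ ≤ ‖F_θ‖₂ ≤ 1`, and by Parseval `b_θ = 0`
exactly when `P_W F_θ = 0`; hence `‖b_θ‖ ≤ 1[P_W F_θ ≠ 0]` and `‖a‖ ≤ P_θ[P_W F_θ ≠ 0]`. -/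

open scoped BigOperators

lemma expec_eq_expect (g : (I → Bool) → ℝ) : expec g = 𝔼 ω, g ω :=
  (Fintype.expect_eq_sum_div_card g).symm

lemma sgn_mul_self (b : Bool) : sgn b * sgn b = 1 := by
  cases b <;> norm_num [sgn]

lemma sgn_not (b : Bool) : sgn (!b) = -sgn b := by
  cases b <;> simp [sgn]

lemma chi_mul_chi (S T : Finset I) (ω : I → Bool) :
    chi S ω * chi T ω = chi (symmDiff S T) ω := by
  have hsq : ∏ i ∈ S ∩ T, sgn (ω i) * sgn (ω i) = 1 :=
    prod_eq_one fun i _ => sgn_mul_self (ω i)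
  rw [chi, chi, chi, ← prod_union_inter, symmDiff_eq_sup_sdiff_inf,
    ← prod_sdiff (show S ∩ T ⊆ S ∪ T from inter_subset_union), mul_assoc, ← prod_mul_distrib,
    hsq, mul_one]
  rfl

omit [Fintype I] in
lemma chi_update_not {S : Finset I} {i : I} (hi : i ∈ S) (ω : I → Bool) :
    chi S (Function.update ω i (!ω i)) = -chi S ω := by
  have hrest : ∏ j ∈ S.erase i, sgn (Function.update ω i (!ω i) j) = ∏ j ∈ S.erase i, sgn (ω j) :=
    prod_congr rfl fun j hj => by rw [Function.update_of_ne (ne_of_mem_erase hj)]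
  rw [chi, chi, ← mul_prod_erase S _ hi, ← mul_prod_erase S _ hi, hrest, Function.update_self,
    sgn_not, neg_mul]

lemma expect_chi_of_nonempty {S : Finset I} (hS : S.Nonempty) : 𝔼 ω, chi S ω = 0 := by
  obtain ⟨i, hi⟩ := hS
  have hflip : Function.Involutive fun ω : I → Bool => Function.update ω i (!ω i) := by
    intro ω
    simp
  have hneg : 𝔼 ω, chi S ω = 𝔼 ω, -chi S ω :=
    Fintype.expect_equiv (hflip.toPerm _) _ _ fun ω => by
      simp [Function.Involutive.coe_toPerm, chi_update_not hi]
  rw [expect_neg_distrib] at hneg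
  linarith

lemma expect_chi_mul_chi (S T : Finset I) :
    𝔼 ω, chi S ω * chi T ω = if S = T then 1 else 0 := by
  simp_rw [chi_mul_chi]
  split_ifs with hST
  · simp [hST, chi]
  · exact expect_chi_of_nonempty (nonempty_iff_ne_empty.2 (mt symmDiff_eq_bot.1 hST))

/-- `walshSum fam (fhat g)` is the projection `P_W g` onto `W = span {χ_S : S ∈ fam}`. -/
noncomputable def walshSum (fam : Finset (Finset I)) (a : Finset I → ℝ) (ω : I → Bool) : ℝ :=
  ∑ S ∈ fam, a S * chi S ω

lemma fhat_mul_walshSum (g : (I → Bool) → ℝ) (fam : Finset (Finset I)) (a : Finset I → ℝ) :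
    𝔼 ω, g ω * walshSum fam a ω = ∑ S ∈ fam, a S * fhat g S := by
  simp_rw [walshSum, mul_sum, fhat, expec_eq_expect]
  rw [expect_sum_comm]
  refine sum_congr rfl fun S _ => ?_
  rw [mul_expect]
  exact expect_congr rfl fun ω _ => by ring

lemma fhat_walshSum {fam : Finset (Finset I)} (a : Finset I → ℝ) {T : Finset I} (hT : T ∈ fam) :
    fhat (walshSum fam a) T = a T := by
  simp_rw [fhat, expec_eq_expect, walshSum, sum_mul, mul_assoc]
  rw [expect_sum_comm]
  simp_rw [← mul_expect, expect_chi_mul_chi, mul_ite, mul_one, mul_zero]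
  rw [sum_ite_eq' fam T, if_pos hT]

lemma expect_walshSum_sq (fam : Finset (Finset I)) (a : Finset I → ℝ) :
    𝔼 ω, walshSum fam a ω ^ 2 = ∑ S ∈ fam, a S ^ 2 := by
  simp_rw [sq, fhat_mul_walshSum]
  exact sum_congr rfl fun S hS => by rw [fhat_walshSum a hS]

lemma sum_fhat_sq_le_expect_sq (g : (I → Bool) → ℝ) (fam : Finset (Finset I)) :
    ∑ S ∈ fam, fhat g S ^ 2 ≤ 𝔼 ω, g ω ^ 2 := by
  have hres : 0 ≤ 𝔼 ω, (g ω - walshSum fam (fhat g) ω) ^ 2 :=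
    expect_nonneg fun ω _ => sq_nonneg _
  simp_rw [sub_sq, expect_add_distrib, expect_sub_distrib, mul_assoc, ← mul_expect,
    fhat_mul_walshSum, expect_walshSum_sq, ← sq] at hres
  linarith

open Classical in
lemma sqrt_sum_fhat_sq_le_indicator {g : (I → Bool) → ℝ} (hg : ∀ ω, |g ω| ≤ 1)
    (fam : Finset (Finset I)) :
    √(∑ S ∈ fam, fhat g S ^ 2) ≤ if walshSum fam (fhat g) ≠ 0 then 1 else 0 := by
  split_ifs with hproj
  · refine Real.sqrt_le_one.2 ((sum_fhat_sq_le_expect_sq g fam).trans ?_)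
    calc 𝔼 ω, g ω ^ 2 ≤ 𝔼 _ω : I → Bool, (1 : ℝ) :=
          expect_le_expect fun ω _ => sq_le_one_iff_abs_le_one _ |>.2 (hg ω)
      _ = 1 := Fintype.expect_one
  · rw [← expect_walshSum_sq, not_not.1 hproj]
    simp

lemma le_sq_of_le_sqrt_mul {a p : ℝ} (ha : 0 ≤ a) (h : a ≤ √a * p) : a ≤ p ^ 2 := by
  nlinarith [Real.sq_sqrt ha, Real.sqrt_nonneg a]

/-- The configuration `(θ, η)` of the paper. -/
def glue (Θ : Finset I) (θ η : I → Bool) : I → Bool := fun i => if i ∈ Θ then θ i else η i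

lemma expect_expect_glue (Θ : Finset I) (g : (I → Bool) → ℝ) :
    𝔼 θ, 𝔼 η, g (glue Θ θ η) = 𝔼 ω, g ω := by
  have hswap : Function.Involutive
      fun p : (I → Bool) × (I → Bool) => (glue Θ p.1 p.2, glue Θ p.2 p.1) := by
    intro p
    ext i <;> by_cases hi : i ∈ Θ <;> simp [glue, hi]
  calc 𝔼 θ, 𝔼 η, g (glue Θ θ η) = 𝔼 p : (I → Bool) × (I → Bool), g (glue Θ p.1 p.2) := by
        rw [← univ_product_univ]
        exact (expect_product' _ _ fun θ η => g (glue Θ θ η)).symm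
    _ = 𝔼 p : (I → Bool) × (I → Bool), g p.1 :=
        Fintype.expect_bijective _ hswap.bijective _ _ fun _ => rfl
    _ = 𝔼 ω, g ω := by
        rw [← univ_product_univ, expect_product' _ _ fun θ _ => g θ]
        simp

omit [Fintype I] in
lemma chi_glue_of_disjoint {S Θ : Finset I} (hS : Disjoint S Θ) (θ η : I → Bool) :
    chi S (glue Θ θ η) = chi S η :=
  prod_congr rfl fun i hi => by rw [glue, if_neg (disjoint_left.1 hS hi)]

lemma fhat_eq_expect_fhat_glue (f : (I → Bool) → ℝ) {S Θ : Finset I} (hS : Disjoint S Θ) :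
    fhat f S = 𝔼 θ, fhat (fun η => f (glue Θ θ η)) S := by
  calc fhat f S = 𝔼 ω, f ω * chi S ω := expec_eq_expect _
    _ = 𝔼 θ, 𝔼 η, f (glue Θ θ η) * chi S (glue Θ θ η) := (expect_expect_glue Θ _).symm
    _ = _ := by simp_rw [chi_glue_of_disjoint hS, fhat, expec_eq_expect]

open Classical in
/-- **Projection bound for compatible spectral samples.** Let `f : {-1,1}^I → [-1,1]`,
let the coordinates be partitioned into `Θ` and `H = Θᶜ`, and let `W` be the span of
`{χ_S : S ∈ 𝒳}` for a family `𝒳` of subsets of `H`. Then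
`∑_{S ∈ 𝒳} f̂(S)² = ‖P_W f‖₂²` and this is at most `(P_θ[P_W F_θ ≠ 0])²`, where
`F_θ(η) = f(θ,η)` is the restriction of `f` given the configuration `θ` on `Θ`,
and `P_W g = ∑_{S ∈ 𝒳} ĝ(S) χ_S` is the orthogonal projection onto `W`. -/
theorem projection_bound (f : (I → Bool) → ℝ) (hf : ∀ ω, |f ω| ≤ 1)
    (Θ : Finset I) (fam : Finset (Finset I))
    (hfam : ∀ S ∈ fam, ∀ i ∈ S, i ∉ Θ) :
    expec (fun ω => (∑ S ∈ fam, fhat f S * chi S ω) ^ 2) = ∑ S ∈ fam, fhat f S ^ 2 ∧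
    (∑ S ∈ fam, fhat f S ^ 2)
      ≤ (expec (fun θ =>
          if (fun ω => ∑ S ∈ fam,
                fhat (fun η => f (fun i => if i ∈ Θ then θ i else η i)) S * chi S ω)
              ≠ (fun _ => (0 : ℝ))
          then 1 else 0)) ^ 2 := by
  refine ⟨(expec_eq_expect _).trans (expect_walshSum_sq fam (fhat f)), ?_⟩
  set A := ∑ S ∈ fam, fhat f S ^ 2
  have hdisj : ∀ S ∈ fam, Disjoint S Θ := fun S hS => disjoint_left.2 (hfam S hS)
  have hA : A ≤ √A * expec fun θ =>
      if walshSum fam (fhat fun η => f (glue Θ θ η)) ≠ 0 then 1 else 0 := by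
    rw [expec_eq_expect, mul_expect]
    calc A = 𝔼 θ, ∑ S ∈ fam, fhat f S * fhat (fun η => f (glue Θ θ η)) S := by
          rw [expect_sum_comm]
          refine sum_congr rfl fun S hS => ?_
          rw [← mul_expect, ← fhat_eq_expect_fhat_glue f (hdisj S hS), sq]
      _ ≤ 𝔼 θ, √A * √(∑ S ∈ fam, fhat (fun η => f (glue Θ θ η)) S ^ 2) :=
          expect_le_expect fun θ _ => Real.sum_mul_le_sqrt_mul_sqrt _ _ _
      _ ≤ _ := expect_le_expect fun θ _ => mul_le_mul_of_nonneg_left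
          (sqrt_sum_fhat_sq_le_indicator (fun η => hf _) fam) (Real.sqrt_nonneg A)
  exact le_sq_of_le_sqrt_mul (sum_nonneg fun S _ => sq_nonneg _) hA
end
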